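/- Let q be a prime power and let L be a critical (m×k)-system over F_q, that is, an (m×k)-system with 2 ≤ m ≤ k for which c(L) = k and the whole index set {1,…,k} is a critical set for L. Then for every n ≥ 1 and every balanced function f : F_q^n → ℝ, Δ_L(f) = 2^{1−k} + 2 Λ_L(f). -/

import Mathlib

open Finset

section Defs

variable {F : Type} [Field F] [Fintype F] [DecidableEq F]

/-- The set of solutions to `L x = 0` with all coordinates in `A ⊆ F^n`. -/
def solSet {m k n : ℕ} (L : Matrix (Fin m) (Fin k) F) (A : Set (Fin n → F)) :
    Set (Fin k → Fin n → F) :=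
  {x | (∀ j, x j ∈ A) ∧ ∀ i, ∑ j, L i j • x j = 0}

/-- The finset of all solutions to `L x = 0` over `F^n`. -/
def solutions {m k : ℕ} (L : Matrix (Fin m) (Fin k) F) (n : ℕ) :
    Finset (Fin k → Fin n → F) :=
  Finset.univ.filter fun x => ∀ i, ∑ j, L i j • x j = 0

/-- `Λ_L(f)`, the density of solutions to `L = 0` with respect to `f`. -/
noncomputable def lambdaSol {m k n : ℕ} (L : Matrix (Fin m) (Fin k) F) (f : (Fin n → F) → ℝ) : ℝ :=
  (∑ x ∈ solutions L n, ∏ j, f (x j)) / (solutions L n).card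

/-- `Δ_L(f) = Λ_L(1/2 + f) + Λ_L(1/2 − f)`. -/
noncomputable def deltaSol {m k n : ℕ} (L : Matrix (Fin m) (Fin k) F) (f : (Fin n → F) → ℝ) : ℝ :=
  lambdaSol L (fun y => 1 / 2 + f y) + lambdaSol L (fun y => 1 / 2 - f y)

/-- `L` is common: for every `n ≥ 1` and every `f : F^n → [-1/2,1/2]`,
`Δ_L(f) ≥ 2^(1-k)`. -/
def IsCommon {m k : ℕ} (L : Matrix (Fin m) (Fin k) F) : Prop :=
  ∀ n : ℕ, 1 ≤ n → ∀ f : (Fin n → F) → ℝ,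
    (∀ y, f y ∈ Set.Icc (-(1 / 2) : ℝ) (1 / 2)) →
    (2 : ℝ) ^ (1 - (k : ℤ)) ≤ deltaSol L f

/-- The rows of the coefficient matrix `L` are linearly independent. -/
def RowsIndep {m k : ℕ} (L : Matrix (Fin m) (Fin k) F) : Prop :=
  LinearIndependent F fun i => fun j => L i j

/-- `L` induces the `ℓ`-variable system `L'` on the set `B` (with `B` listed in
increasing order). -/
def InducesOn {m k m' ℓ : ℕ} (L : Matrix (Fin m) (Fin k) F)
    (L' : Matrix (Fin m') (Fin ℓ) F) (B : Finset (Fin k)) (hB : B.card = ℓ) : Prop :=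
  ∀ x : Fin k → F, (∀ i, ∑ j, L i j * x j = 0) →
    ∀ r, ∑ t, L' r t * x (B.orderIsoOfFin hB t).1 = 0

/-- `L` is irredundant: it does not induce the equation `x i − x j = 0` for any `i ≠ j`. -/
def IsIrredundant {m k : ℕ} (L : Matrix (Fin m) (Fin k) F) : Prop :=
  ¬ ∃ i j : Fin k, i ≠ j ∧
    ∀ x : Fin k → F, (∀ r, ∑ t, L r t * x t = 0) → x i = x j

/-- `c` is a (single) linear equation induced by `L`. -/
def InducedEq {m k : ℕ} (L : Matrix (Fin m) (Fin k) F) (c : Fin k → F) : Prop :=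
  ∀ x : Fin k → F, (∀ i, ∑ j, L i j * x j = 0) → ∑ j, c j * x j = 0

/-- Length of an equation: the number of variables with nonzero coefficient. -/
def eqLength {k : ℕ} (c : Fin k → F) : ℕ := (Finset.univ.filter fun j => c j ≠ 0).card

/-- `s(L)`: the minimal length of a nonzero equation induced by `L`. -/
noncomputable def sMin {m k : ℕ} (L : Matrix (Fin m) (Fin k) F) : ℕ :=
  sInf {s | ∃ c : Fin k → F, c ≠ 0 ∧ InducedEq L c ∧ eqLength c = s}

/-- `c(L)`: `s(L)` rounded up to the nearest even number. -/
noncomputable def cEven {m k : ℕ} (L : Matrix (Fin m) (Fin k) F) : ℕ :=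
  if Even (sMin L) then sMin L else sMin L + 1

/-- `B` is a critical set for `L`: `|B| = c(L)` and `L` induces some system on `B`. -/
def IsCriticalSet {m k : ℕ} (L : Matrix (Fin m) (Fin k) F) (B : Finset (Fin k)) : Prop :=
  B.card = cEven L ∧ ∃ (m' : ℕ) (L' : Matrix (Fin m') (Fin B.card) F),
    1 ≤ m' ∧ RowsIndep L' ∧ InducesOn L L' B rfl

/-- `m_B`: the maximal `m'` such that `L` induces an `(m' × |B|)`-system on `B`. -/
noncomputable def mMax {m k : ℕ} (L : Matrix (Fin m) (Fin k) F) (B : Finset (Fin k)) : ℕ :=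
  sSup {m' | ∃ L' : Matrix (Fin m') (Fin B.card) F, RowsIndep L' ∧ InducesOn L L' B rfl}

/-- `Φ_L(B, f)`. -/
noncomputable def Phi {m k n : ℕ} (L : Matrix (Fin m) (Fin k) F) (B : Finset (Fin k))
    (f : (Fin n → F) → ℝ) : ℝ :=
  (∑ x ∈ solutions L n, ∏ j ∈ B, f (x j)) / (solutions L n).card

/-- `B` is rank-reducing for `L`: deleting the columns indexed by `B` decreases the rank. -/
def RankReducing {m k : ℕ} (L : Matrix (Fin m) (Fin k) F) (B : Finset (Fin k)) : Prop :=
  (L.submatrix id fun j : {j : Fin k // j ∉ B} => (j : Fin k)).rank < L.rank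

end Defs

set_option linter.unusedSectionVars false

section Aux
variable {F : Type} [Field F] [Fintype F] [DecidableEq F]

lemma mem_solutions' {m k n : ℕ} {L : Matrix (Fin m) (Fin k) F} {x : Fin k → Fin n → F} :
    x ∈ solutions L n ↔ ∀ i, ∑ j, L i j • x j = 0 := by
  simp [solutions]

lemma zero_mem_solutions' {m k : ℕ} (L : Matrix (Fin m) (Fin k) F) (n : ℕ) :
    (0 : Fin k → Fin n → F) ∈ solutions L n := by
  simp [mem_solutions']

lemma sub_mem_solutions' {m k n : ℕ} {L : Matrix (Fin m) (Fin k) F}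
    {x y : Fin k → Fin n → F} (hx : x ∈ solutions L n) (hy : y ∈ solutions L n) :
    x - y ∈ solutions L n := by
  rw [mem_solutions'] at hx hy ⊢
  intro i
  simp only [Pi.sub_apply, smul_sub, Finset.sum_sub_distrib, hx i, hy i, sub_zero]

lemma add_mem_solutions' {m k n : ℕ} {L : Matrix (Fin m) (Fin k) F}
    {x y : Fin k → Fin n → F} (hx : x ∈ solutions L n) (hy : y ∈ solutions L n) :
    x + y ∈ solutions L n := by
  rw [mem_solutions'] at hx hy ⊢
  intro i
  simp only [Pi.add_apply, smul_add, Finset.sum_add_distrib, hx i, hy i, add_zero]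

/-- Surjectivity of the restriction of the kernel of `L` to coordinates in `S`. -/
lemma surj_on_subset {m k : ℕ} (L : Matrix (Fin m) (Fin k) F) (S : Finset (Fin k))
    (hno : ∀ c : Fin k → F, (∀ j, j ∉ S → c j = 0) → InducedEq L c → c = 0)
    (y : {j // j ∈ S} → F) :
    ∃ x : Fin k → F, (∀ i, ∑ j, L i j * x j = 0) ∧ ∀ t : {j // j ∈ S}, x t.1 = y t := by
  classical
  set W : Submodule F (Fin k → F) := LinearMap.ker L.mulVecLin with hW
  set π : (Fin k → F) →ₗ[F] ({j // j ∈ S} → F) := LinearMap.funLeft F F (fun t => t.1) with hπ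
  have hmem : ∀ x : Fin k → F, x ∈ W ↔ ∀ i, ∑ j, L i j * x j = 0 := by
    intro x
    simp only [hW, LinearMap.mem_ker, Matrix.mulVecLin_apply]
    constructor
    · intro h i
      have := congrFun h i
      simpa [Matrix.mulVec, dotProduct] using this
    · intro h
      funext i
      simpa [Matrix.mulVec, dotProduct] using h i
  have hmap : W.map π = ⊤ := by
    by_contra h
    obtain ⟨φ, hφ, hφ0⟩ := Submodule.exists_dual_map_eq_bot_of_lt_top
      (lt_top_iff_ne_top.2 h) inferInstance
    set c : Fin k → F := fun j =>
      if hj : j ∈ S then φ (fun u => if (⟨j, hj⟩ : {j // j ∈ S}) = u then 1 else 0) else 0 with hc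
    have hcsupp : ∀ j, j ∉ S → c j = 0 := by
      intro j hj; simp [hc, hj]
    have hphi_pi : ∀ z : {j // j ∈ S} → F, φ z = ∑ t, z t • φ (fun u => if t = u then 1 else 0) :=
      fun z => LinearMap.pi_apply_eq_sum_univ φ z
    have hcval : ∀ t : {j // j ∈ S}, c t.1 = φ (fun u => if t = u then 1 else 0) := by
      intro t
      simp only [hc, dif_pos t.2]
    have hcind : InducedEq L c := by
      intro x hx
      have hxW : x ∈ W := (hmem x).2 hx
      have hπx : π x ∈ W.map π := Submodule.mem_map_of_mem hxW
      have : φ (π x) = 0 := by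
        have h' := Submodule.mem_map_of_mem (f := φ) hπx
        rw [hφ0, Submodule.mem_bot] at h'
        exact h'
      rw [hphi_pi (π x)] at this
      calc ∑ j, c j * x j = ∑ t : {j // j ∈ S}, c t.1 * x t.1 := by
            rw [Finset.sum_coe_sort S (fun j => c j * x j)]
            apply (Finset.sum_subset (Finset.subset_univ S) ?_).symm
            intro j _ hj
            rw [hcsupp j hj, zero_mul]
        _ = 0 := by
            rw [← this]
            apply Finset.sum_congr rfl
            intro t _
            rw [hcval t]
            simp [hπ, LinearMap.funLeft, smul_eq_mul, mul_comm]
    have hc0 : c = 0 := hno c hcsupp hcind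
    apply hφ
    apply LinearMap.ext
    intro z
    rw [hphi_pi z]
    simp only [LinearMap.zero_apply]
    apply Finset.sum_eq_zero
    intro t _
    rw [← hcval t, hc0]
    simp
  have hy : y ∈ W.map π := hmap ▸ Submodule.mem_top
  obtain ⟨x, hxW, hxy⟩ := hy
  exact ⟨x, (hmem x).1 hxW, fun t => congrFun hxy t⟩

/-- Level-n surjectivity. -/
lemma surj_restrict {m k n : ℕ} (L : Matrix (Fin m) (Fin k) F) (S : Finset (Fin k))
    (hno : ∀ c : Fin k → F, (∀ j, j ∉ S → c j = 0) → InducedEq L c → c = 0)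
    (y : {j // j ∈ S} → Fin n → F) :
    ∃ x ∈ solutions L n, (fun t : {j // j ∈ S} => x t.1) = y := by
  choose w hw1 hw2 using fun t' : Fin n => surj_on_subset L S hno (fun t => y t t')
  refine ⟨fun j t' => w t' j, ?_, ?_⟩
  · rw [mem_solutions']
    intro i
    funext t'
    have := hw1 t' i
    simpa [Finset.sum_apply, smul_eq_mul] using this
  · funext t t'
    exact hw2 t' t

/-- The vanishing of `∑_{x ∈ sol} ∏_{j ∈ S} f (x j)` for balanced `f`. -/
lemma sum_prod_vanish {m k n : ℕ} (L : Matrix (Fin m) (Fin k) F) (S : Finset (Fin k))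
    (hS : S.Nonempty)
    (hno : ∀ c : Fin k → F, (∀ j, j ∉ S → c j = 0) → InducedEq L c → c = 0)
    (f : (Fin n → F) → ℝ) (hbal : ∑ y : Fin n → F, f y = 0) :
    ∑ x ∈ solutions L n, ∏ j ∈ S, f (x j) = 0 := by
  classical
  set V := solutions L n with hV
  set r : (Fin k → Fin n → F) → ({j // j ∈ S} → Fin n → F) := fun x t => x t.1 with hr
  have h1 : ∀ x : Fin k → Fin n → F, ∏ j ∈ S, f (x j) = ∏ t : {j // j ∈ S}, f (r x t) := by
    intro x
    exact (Finset.prod_coe_sort S (fun j => f (x j))).symm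
  -- constant fibers
  have hcard : ∀ y : {j // j ∈ S} → Fin n → F,
      (V.filter fun x => r x = y).card = (V.filter fun x => r x = 0).card := by
    intro y
    obtain ⟨x0, hx0V, hx0⟩ := surj_restrict L S hno y
    apply Finset.card_bij' (fun x _ => x - x0) (fun x _ => x + x0)
    · intro a ha
      simp only [Finset.mem_filter] at ha ⊢
      refine ⟨sub_mem_solutions' ha.1 hx0V, ?_⟩
      funext t
      have := congrFun ha.2 t
      have h2 := congrFun hx0 t
      simp only [hr] at this h2 ⊢
      simp [Pi.sub_apply, this, h2]
    · intro a ha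
      simp only [Finset.mem_filter] at ha ⊢
      refine ⟨add_mem_solutions' ha.1 hx0V, ?_⟩
      funext t
      have := congrFun ha.2 t
      have h2 := congrFun hx0 t
      simp only [hr] at this h2 ⊢
      simp [Pi.add_apply, this, h2]
    · intro a _; simp
    · intro a _; simp
  have hfib : ∑ x ∈ V, ∏ t : {j // j ∈ S}, f (r x t) =
      ∑ y : {j // j ∈ S} → Fin n → F, ((V.filter fun x => r x = y).card : ℝ) *
        ∏ t : {j // j ∈ S}, f (y t) := by
    rw [← Finset.sum_fiberwise' V r (fun y => ∏ t : {j // j ∈ S}, f (y t))]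
    apply Finset.sum_congr rfl
    intro y _
    rw [Finset.sum_const, nsmul_eq_mul]
  have hsum0 : ∑ y : {j // j ∈ S} → Fin n → F, ∏ t : {j // j ∈ S}, f (y t) = 0 := by
    have := Finset.prod_univ_sum (fun _ : {j // j ∈ S} => (Finset.univ : Finset (Fin n → F)))
      (fun _ z => f z)
    rw [Fintype.piFinset_univ] at this
    rw [← this, hbal]
    rw [Finset.prod_const, zero_pow]
    simpa [Finset.card_univ] using hS.card_pos.ne'
  calc ∑ x ∈ V, ∏ j ∈ S, f (x j) = ∑ x ∈ V, ∏ t : {j // j ∈ S}, f (r x t) :=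
        Finset.sum_congr rfl (fun x _ => h1 x)
    _ = ∑ y : {j // j ∈ S} → Fin n → F, ((V.filter fun x => r x = y).card : ℝ) *
          ∏ t : {j // j ∈ S}, f (y t) := hfib
    _ = ((V.filter fun x => r x = 0).card : ℝ) *
          ∑ y : {j // j ∈ S} → Fin n → F, ∏ t : {j // j ∈ S}, f (y t) := by
        rw [Finset.mul_sum]
        apply Finset.sum_congr rfl
        intro y _
        rw [hcard y]
    _ = 0 := by rw [hsum0, mul_zero]

end Aux

/-- for a critical `(m × k)`-system `L` and balanced `f`,
`Δ_L(f) = 2^{1−k} + 2 Λ_L(f)`. -/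
theorem delta_eq_of_critical_system
    {F : Type} [Field F] [Fintype F] [DecidableEq F]
    {m k : ℕ} (hm : 2 ≤ m) (hmk : m ≤ k)
    (L : Matrix (Fin m) (Fin k) F) (hL : RowsIndep L)
    (hck : cEven L = k) (hcrit : IsCriticalSet L (Finset.univ : Finset (Fin k)))
    (n : ℕ) (hn : 1 ≤ n) (f : (Fin n → F) → ℝ)
    (hbal : ∑ y : Fin n → F, f y = 0) :
    deltaSol L f = (2 : ℝ) ^ (1 - (k : ℤ)) + 2 * lambdaSol L f := by
  classical
  set V := solutions (n := n) L with hV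
  have hcardpos : 0 < V.card := Finset.card_pos.2 ⟨0, zero_mem_solutions' L n⟩
  have hcardne : (V.card : ℝ) ≠ 0 := Nat.cast_ne_zero.2 hcardpos.ne'
  have hkeven : Even k := by
    rw [← hck]
    unfold cEven
    split
    · assumption
    · exact Nat.even_add_one.2 (by assumption)
  have hk2 : 2 ≤ k := le_trans hm hmk
  have hsmin : k - 1 ≤ sMin L := by
    unfold cEven at hck
    split at hck <;> omega
  have hno : ∀ S : Finset (Fin k), S.card + 1 < k →
      ∀ c : Fin k → F, (∀ j, j ∉ S → c j = 0) → InducedEq L c → c = 0 := by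
    intro S hScard c hsupp hind
    by_contra hc
    have h1 : sMin L ≤ eqLength c := Nat.sInf_le ⟨c, hc, hind, rfl⟩
    have h2 : eqLength c ≤ S.card := by
      apply Finset.card_le_card
      intro j hj
      simp only [Finset.mem_filter, Finset.mem_univ, true_and] at hj
      by_contra hjS
      exact hj (hsupp j hjS)
    unfold eqLength at h1 h2
    omega
  -- pointwise expansion
  have hprodneg : ∀ (x : Fin k → Fin n → F) (t : Finset (Fin k)),
      ∏ j ∈ t, (-(f (x j))) = (-1 : ℝ) ^ t.card * ∏ j ∈ t, f (x j) := by
    intro x t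
    rw [← Finset.prod_const, ← Finset.prod_mul_distrib]
    apply Finset.prod_congr rfl
    intro j _
    ring
  have hcardsdiff : ∀ t : Finset (Fin k), t ⊆ Finset.univ →
      ((Finset.univ : Finset (Fin k)) \ t).card = k - t.card := by
    intro t ht
    rw [Finset.card_sdiff_of_subset ht, Finset.card_univ, Fintype.card_fin]
  have hexp : ∀ x : Fin k → Fin n → F,
      ((∏ j, ((1:ℝ)/2 + f (x j))) + ∏ j, ((1:ℝ)/2 - f (x j))) =
      ∑ t ∈ (Finset.univ : Finset (Fin k)).powerset,
        ((1 + (-1:ℝ)^t.card) * (1/2)^(k - t.card)) * ∏ j ∈ t, f (x j) := by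
    intro x
    have e1 : ∏ j, ((1:ℝ)/2 + f (x j)) =
        ∑ t ∈ (Finset.univ : Finset (Fin k)).powerset,
          (∏ j ∈ t, f (x j)) * (1/2)^(k - t.card) := by
      calc ∏ j, ((1:ℝ)/2 + f (x j)) = ∏ j, (f (x j) + (1:ℝ)/2) := by
            apply Finset.prod_congr rfl; intro j _; ring
        _ = ∑ t ∈ (Finset.univ : Finset (Fin k)).powerset,
              (∏ j ∈ t, f (x j)) * ∏ _j ∈ Finset.univ \ t, ((1:ℝ)/2) :=
            Finset.prod_add _ _ _
        _ = _ := by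
            apply Finset.sum_congr rfl
            intro t ht
            rw [Finset.prod_const, hcardsdiff t (Finset.mem_powerset.1 ht)]
    have e2 : ∏ j, ((1:ℝ)/2 - f (x j)) =
        ∑ t ∈ (Finset.univ : Finset (Fin k)).powerset,
          (-1:ℝ)^t.card * (∏ j ∈ t, f (x j)) * (1/2)^(k - t.card) := by
      calc ∏ j, ((1:ℝ)/2 - f (x j)) = ∏ j, ((-(f (x j))) + (1:ℝ)/2) := by
            apply Finset.prod_congr rfl; intro j _; ring
        _ = ∑ t ∈ (Finset.univ : Finset (Fin k)).powerset,
              (∏ j ∈ t, (-(f (x j)))) * ∏ _j ∈ Finset.univ \ t, ((1:ℝ)/2) :=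
            Finset.prod_add _ _ _
        _ = _ := by
            apply Finset.sum_congr rfl
            intro t ht
            rw [Finset.prod_const, hcardsdiff t (Finset.mem_powerset.1 ht), hprodneg]
    rw [e1, e2, ← Finset.sum_add_distrib]
    apply Finset.sum_congr rfl
    intro t _
    ring
  -- the T-values
  set T : Finset (Fin k) → ℝ := fun t => ∑ x ∈ V, ∏ j ∈ t, f (x j) with hT
  have hTvanish : ∀ t ∈ (Finset.univ : Finset (Fin k)).powerset,
      t ∉ ({∅, Finset.univ} : Finset (Finset (Fin k))) →
      ((1 + (-1:ℝ)^t.card) * (1/2)^(k - t.card)) * T t = 0 := by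
    intro t ht htne
    simp only [Finset.mem_insert, Finset.mem_singleton] at htne
    push_neg at htne
    rcases Nat.even_or_odd t.card with hev | hodd
    · have htne' : t.Nonempty := htne.1
      have htcard : t.card + 1 < k := by
        have hlt : t.card < k := by
          have := Finset.card_lt_card (lt_of_le_of_ne (Finset.subset_univ t)
            htne.2)
          simpa [Finset.card_univ] using this
        obtain ⟨a, ha⟩ := hev
        obtain ⟨b, hb⟩ := hkeven
        omega
      have : T t = 0 := sum_prod_vanish L t htne' (hno t htcard) f hbal
      rw [this, mul_zero]
    · rw [hodd.neg_one_pow]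
      norm_num
  have hpair : (∅ : Finset (Fin k)) ≠ Finset.univ := by
    have : (Finset.univ : Finset (Fin k)).Nonempty := ⟨⟨0, by omega⟩, Finset.mem_univ _⟩
    exact fun h => (Finset.nonempty_iff_ne_empty.1 this) h.symm
  have hsubset : ({∅, Finset.univ} : Finset (Finset (Fin k))) ⊆
      (Finset.univ : Finset (Fin k)).powerset := by
    intro t ht
    simp only [Finset.mem_insert, Finset.mem_singleton] at ht
    rcases ht with h | h <;> simp [h]
  have hT0 : T ∅ = (V.card : ℝ) := by
    simp [hT]
  have hmain : ∑ x ∈ V, ((∏ j, ((1:ℝ)/2 + f (x j))) + ∏ j, ((1:ℝ)/2 - f (x j))) =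
      2 * (1/2)^k * (V.card : ℝ) + 2 * T Finset.univ := by
    calc ∑ x ∈ V, ((∏ j, ((1:ℝ)/2 + f (x j))) + ∏ j, ((1:ℝ)/2 - f (x j)))
        = ∑ x ∈ V, ∑ t ∈ (Finset.univ : Finset (Fin k)).powerset,
            ((1 + (-1:ℝ)^t.card) * (1/2)^(k - t.card)) * ∏ j ∈ t, f (x j) :=
          Finset.sum_congr rfl (fun x _ => hexp x)
      _ = ∑ t ∈ (Finset.univ : Finset (Fin k)).powerset,
            ((1 + (-1:ℝ)^t.card) * (1/2)^(k - t.card)) * T t := by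
          rw [Finset.sum_comm]
          apply Finset.sum_congr rfl
          intro t _
          rw [hT, Finset.mul_sum]
      _ = ∑ t ∈ ({∅, Finset.univ} : Finset (Finset (Fin k))),
            ((1 + (-1:ℝ)^t.card) * (1/2)^(k - t.card)) * T t :=
          (Finset.sum_subset hsubset hTvanish).symm
      _ = ((1 + (-1:ℝ)^(∅ : Finset (Fin k)).card) * (1/2)^(k - (∅ : Finset (Fin k)).card)) * T ∅
          + ((1 + (-1:ℝ)^(Finset.univ : Finset (Fin k)).card) *
            (1/2)^(k - (Finset.univ : Finset (Fin k)).card)) * T Finset.univ :=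
          Finset.sum_pair hpair
      _ = 2 * (1/2)^k * (V.card : ℝ) + 2 * T Finset.univ := by
          rw [hT0]
          rw [Finset.card_empty, Finset.card_univ, Fintype.card_fin]
          rw [hkeven.neg_one_pow]
          norm_num
  have hlam : lambdaSol (n := n) L f = T Finset.univ / (V.card : ℝ) := by
    rw [lambdaSol, hT]
  have hpow : ((2:ℝ)) ^ (1 - (k:ℤ)) = 2 * ((1:ℝ)/2)^k := by
    rw [one_div, inv_pow, zpow_sub₀ (by norm_num : (2:ℝ) ≠ 0), zpow_one, zpow_natCast]
    ring
  rw [deltaSol, lambdaSol, lambdaSol, hlam, hpow]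
  rw [← add_div, ← Finset.sum_add_distrib]
  rw [← hV, hmain]
  field_simp
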